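/- Let V, W be normed spaces, V_h ⊆ V and W_h finite-dimensional subspaces with dim V_h = dim W_h, and let a_h : V_h × W_h → ℝ be bilinear with inf-sup constant α_h > 0, i.e., for all v_h ∈ V_h, α_h‖v_h‖_{V_h} ≤ sup_{0≠w_h∈W_h} |a_h(v_h,w_h)|/‖w_h‖_{W_h}. Let u ∈ V_♯ (a space containing V_h with norm ‖·‖_{V♯}), let u_h ∈ V_h, define δ_h(v_h) ∈ W_h' by ⟨δ_h(v_h), w_h⟩ = a_h(u_h − v_h, w_h), and assume (i) ‖v_h‖_{V♯} ≤ c_♯‖v_h‖_{V_h} for all v_h ∈ V_h, and (ii) ‖δ_h(v_h)‖_{W_h'} ≤ ω_♯‖u − v_h‖_{V♯} for all v_h ∈ V_h. Then ‖u − u_h‖_{V♯} ≤ (1 + c_♯ω_♯/α_h)·inf_{v_h∈V_h} ‖u − v_h‖_{V♯}. -/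
import Mathlib

/-- abstract quasi-optimal error estimate. `X` plays the role of
`V_♯` (with norm `‖·‖_{V♯}`), `Vh`, `Wh` are the discrete spaces, `ι : Vh → X`
the inclusion, `A v : Wh →L ℝ` the functional `a_h(v, ·)` (so that
`‖A v‖ = sup_{w≠0} |a_h(v,w)|/‖w‖`), and `A uh - A v = δ_h(v)`. Under the
inf-sup condition, the norm comparison `‖ι v‖ ≤ c♯‖v‖` and the consistency
bound `‖δ_h(v)‖ ≤ ω♯‖u − ι v‖`, one has
`‖u − u_h‖_{V♯} ≤ (1 + c♯ω♯/α_h) ‖u − v_h‖_{V♯}` for every `v_h`, hence the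
bound by the infimum. -/
theorem stmt8 {X Vh Wh : Type*}
    [NormedAddCommGroup X] [NormedSpace ℝ X]
    [NormedAddCommGroup Vh] [NormedSpace ℝ Vh]
    [NormedAddCommGroup Wh] [NormedSpace ℝ Wh]
    [FiniteDimensional ℝ Vh] [FiniteDimensional ℝ Wh]
    (hdim : Module.finrank ℝ Vh = Module.finrank ℝ Wh)
    (ι : Vh →ₗ[ℝ] X) (A : Vh →L[ℝ] Wh →L[ℝ] ℝ)
    (ah csh wsh : ℝ) (hah : 0 < ah) (hcsh : 0 ≤ csh) (hwsh : 0 ≤ wsh)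
    (hinfsup : ∀ v : Vh, ah * ‖v‖ ≤ ‖A v‖)
    (u : X) (uh : Vh)
    (hc : ∀ v : Vh, ‖ι v‖ ≤ csh * ‖v‖)
    (hdelta : ∀ v : Vh, ‖A uh - A v‖ ≤ wsh * ‖u - ι v‖) :
    ∀ v : Vh, ‖u - ι uh‖ ≤ (1 + csh * wsh / ah) * ‖u - ι v‖ := by
  intro v
  have h1 : ‖uh - v‖ ≤ wsh / ah * ‖u - ι v‖ := by
    have h2 : ah * ‖uh - v‖ ≤ ‖A (uh - v)‖ := hinfsup _
    have h3 : A (uh - v) = A uh - A v := map_sub A uh v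
    have h4 : ah * ‖uh - v‖ ≤ wsh * ‖u - ι v‖ := by
      calc ah * ‖uh - v‖ ≤ ‖A uh - A v‖ := h3 ▸ h2
        _ ≤ wsh * ‖u - ι v‖ := hdelta v
    rw [div_mul_eq_mul_div, le_div_iff₀ hah, mul_comm]
    linarith
  have h5 : u - ι uh = (u - ι v) + ι (v - uh) := by
    rw [map_sub]; abel
  calc ‖u - ι uh‖ = ‖(u - ι v) + ι (v - uh)‖ := by rw [h5]
    _ ≤ ‖u - ι v‖ + ‖ι (v - uh)‖ := norm_add_le _ _
    _ ≤ ‖u - ι v‖ + csh * ‖v - uh‖ := by linarith [hc (v - uh)]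
    _ = ‖u - ι v‖ + csh * ‖uh - v‖ := by rw [norm_sub_rev v uh]
    _ ≤ ‖u - ι v‖ + csh * (wsh / ah * ‖u - ι v‖) := by
        have := mul_le_mul_of_nonneg_left h1 hcsh; linarith
    _ = (1 + csh * wsh / ah) * ‖u - ι v‖ := by ring
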